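/- Let n ≥ 1, let α_1,…,α_n > 0 with Σ_{i=1}^n α_i = 1, and let γ > 0 satisfy γ·α_i ≤ 1 for every i. Set β_i = γ·α_i and p = (1 − ∏_{j=1}^n (1−γα_j))/γ. Then: (a) there exist allocation probabilities (q_S^i) (a family with q_S^i ∈ [0,1], q_S^i = 0 when i ∉ S, Σ_{i∈S} q_S^i = 1 for every nonempty S ⊆ {1,…,n}) such that for every i, Σ_{S∋i} q_S^i ∏_{j∈S∖{i}} β_j ∏_{j∉S}(1−β_j) = p; and (b) p ≥ (1 − e^{−γ})/γ. -/

import Mathlib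

/-
Order the bidders and write `Q k = ∏_{j<k} (1 - β j)` for the probability that none of the
first `k` bids, and `P k = (1 - Q k) / ∑_{j<k} β j` for the common interim probability of the
first `k` bidders alone. Offer the item to the bidders present from the highest index down:
bidder `k` accepts with probability `μ k = (P (k+1) - Q k) / (1 - Q k)`, and the lowest bidder
present always accepts. Bidder `i` then wins with probability
`(μ i + (1 - μ i) Q i) ∏_{j>i} (1 - μ j β j) = P (i+1) ∏_{j>i} (1 - μ j β j)`, and the identity
`P (j+1) = P j (1 - μ j β j)` telescopes this to `P n = p`. The constraint `0 ≤ μ k ≤ 1` is the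
pair of inequalities `1 - ∑ x ≤ ∏ (1 - x)` and `∏ (1 - x) (1 + ∑ x) ≤ 1`. Part (b) is
`1 - x ≤ exp (-x)`.
-/

open Finset

section Inequalities

variable {ι : Type*} {s : Finset ι} {f : ι → ℝ}

theorem Finset.one_sub_sum_le_prod_one_sub (hf : ∀ i ∈ s, f i ∈ Set.Icc 0 1) :
    1 - ∑ i ∈ s, f i ≤ ∏ i ∈ s, (1 - f i) := by
  classical
  induction s using Finset.induction_on with
  | empty => simp
  | insert a s ha ih =>
    obtain ⟨hfa0, hfa1⟩ := hf a (mem_insert_self a s)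
    have ih := ih fun i hi => hf i (mem_insert_of_mem hi)
    have hsum : 0 ≤ ∑ i ∈ s, f i := sum_nonneg fun i hi => (hf i (mem_insert_of_mem hi)).1
    rw [sum_insert ha, prod_insert ha]
    nlinarith [mul_le_mul_of_nonneg_left ih (sub_nonneg.2 hfa1)]

theorem Finset.prod_one_sub_mul_one_add_sum_le_one (hf : ∀ i ∈ s, f i ∈ Set.Icc 0 1) :
    (∏ i ∈ s, (1 - f i)) * (1 + ∑ i ∈ s, f i) ≤ 1 := by
  classical
  induction s using Finset.induction_on with
  | empty => simp
  | insert a s ha ih =>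
    obtain ⟨hfa0, hfa1⟩ := hf a (mem_insert_self a s)
    have ih := ih fun i hi => hf i (mem_insert_of_mem hi)
    have hsum : 0 ≤ ∑ i ∈ s, f i := sum_nonneg fun i hi => (hf i (mem_insert_of_mem hi)).1
    have hprod : 0 ≤ ∏ i ∈ s, (1 - f i) :=
      prod_nonneg fun i hi => sub_nonneg.2 (hf i (mem_insert_of_mem hi)).2
    rw [sum_insert ha, prod_insert ha]
    nlinarith [mul_nonneg hfa0 (sub_nonneg.2 hfa1), mul_nonneg hprod hsum]

theorem Real.prod_one_sub_le_exp_neg_sum (hf : ∀ i ∈ s, f i ≤ 1) :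
    ∏ i ∈ s, (1 - f i) ≤ Real.exp (-∑ i ∈ s, f i) := by
  rw [← sum_neg_distrib, Real.exp_sum]
  exact prod_le_prod (fun i hi => sub_nonneg.2 (hf i hi))
    fun i _ => by linarith [Real.add_one_le_exp (-f i)]

end Inequalities

theorem Finset.sum_filter_mem_eq_sum_powerset_erase {ι M : Type*} [DecidableEq ι] [Fintype ι]
    [AddCommMonoid M] (i : ι) (F : Finset ι → M) :
    ∑ S ∈ univ.filter (fun S : Finset ι => i ∈ S), F S =
      ∑ T ∈ (univ.erase i).powerset, F (insert i T) := by
  refine sum_nbij' (fun S => S.erase i) (insert i) ?_ ?_ ?_ ?_ ?_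
  · intro S _
    exact mem_powerset.2 (erase_subset_erase i (subset_univ S))
  · intro T _
    simp
  · intro S hS
    exact insert_erase (mem_filter.1 hS).2
  · intro T hT
    exact erase_insert fun h => by simpa using (mem_powerset.1 hT) h
  · intro S hS
    rw [insert_erase (mem_filter.1 hS).2]

theorem Fin.prod_filter_lt_eq_prod_range {M : Type*} [CommMonoid M] {n : ℕ} (f : ℕ → M)
    (i : Fin n) : ∏ j ∈ univ with j < i, f j = ∏ k ∈ range i, f k := by
  rw [filter_gt_eq_Iio, ← Nat.Iio_eq_range, ← Fin.map_valEmbedding_Iio, prod_map]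
  rfl

theorem Fin.prod_filter_gt_eq_prod_Ioo {M : Type*} [CommMonoid M] {n : ℕ} (f : ℕ → M)
    (i : Fin n) : ∏ j ∈ univ with i < j, f j = ∏ k ∈ Ioo (i : ℕ) n, f k := by
  rw [filter_lt_eq_Ioi, ← Fin.map_valEmbedding_Ioi, prod_map]
  rfl

noncomputable section

namespace Allocation

section Sequential

variable {ι : Type*} [LinearOrder ι]

def seqAlloc (μ : ι → ℝ) (S : Finset ι) (i : ι) : ℝ :=
  if i ∈ S then (if ∀ j ∈ S, i ≤ j then 1 else μ i) * ∏ j ∈ S with i < j, (1 - μ j) else 0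

def interimProb [Fintype ι] (q : Finset ι → ι → ℝ) (β : ι → ℝ) (i : ι) : ℝ :=
  ∑ S ∈ univ.filter (fun S : Finset ι => i ∈ S),
    q S i * (∏ j ∈ S.erase i, β j) * (∏ j ∈ Sᶜ, (1 - β j))

variable {μ : ι → ℝ} {S : Finset ι} {i : ι}

theorem seqAlloc_of_notMem (h : i ∉ S) : seqAlloc μ S i = 0 := if_neg h

theorem seqAlloc_mem_unitInterval (hμ : ∀ j, μ j ∈ unitInterval) :
    seqAlloc μ S i ∈ unitInterval := by
  unfold seqAlloc
  split_ifs
  · exact unitInterval.mul_mem unitInterval.one_mem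
      (unitInterval.prod_mem fun j _ => Set.Icc.mem_iff_one_sub_mem.mp (hμ j))
  · exact unitInterval.mul_mem (hμ i)
      (unitInterval.prod_mem fun j _ => Set.Icc.mem_iff_one_sub_mem.mp (hμ j))
  · exact unitInterval.zero_mem

theorem seqAlloc_insert_of_lt {a : ι} (ha : ∀ j ∈ S, j < a) (hi : i ∈ S) :
    seqAlloc μ (insert a S) i = (1 - μ a) * seqAlloc μ S i := by
  have hia := ha i hi
  simp only [seqAlloc, mem_insert_of_mem hi, hi, if_true, forall_mem_insert, hia.le, true_and,
    filter_insert, if_pos hia, prod_insert (fun h => lt_irrefl a (ha a (mem_filter.1 h).1))]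
  ring

theorem seqAlloc_insert_self {a : ι} (ha : ∀ j ∈ S, j < a) :
    seqAlloc μ (insert a S) a = if S = ∅ then 1 else μ a := by
  have hfilter : S.filter (a < ·) = ∅ := filter_false_of_mem fun j hj => (ha j hj).not_gt
  simp only [seqAlloc, mem_insert_self, if_true, forall_mem_insert, le_refl, true_and,
    filter_insert, lt_irrefl, if_false, hfilter, prod_empty, mul_one]
  rcases S.eq_empty_or_nonempty with rfl | ⟨j, hj⟩
  · simp
  · rw [if_neg (ne_empty_of_mem hj), if_neg fun h => (ha j hj).not_ge (h j hj)]

theorem sum_seqAlloc (hS : S.Nonempty) : ∑ i ∈ S, seqAlloc μ S i = 1 := by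
  induction S using Finset.induction_on_max with
  | empty => simp at hS
  | insert a s ha ih =>
    have ha' : a ∉ s := fun h => lt_irrefl a (ha a h)
    rw [sum_insert ha', sum_congr rfl fun i hi => seqAlloc_insert_of_lt ha hi, ← mul_sum,
      seqAlloc_insert_self ha]
    rcases s.eq_empty_or_nonempty with rfl | hs
    · simp
    · rw [if_neg hs.ne_empty, ih hs]
      ring

theorem seqAlloc_insert_self_eq_add (T : Finset ι) :
    seqAlloc μ (insert i T) i =
      μ i * ∏ j ∈ T, (if i < j then 1 - μ j else 1) +
        (1 - μ i) * ∏ j ∈ T, ((if i < j then 1 - μ j else 1) * if i ≤ j then 1 else 0) := by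
  have hboole : ∏ j ∈ T, (if i ≤ j then (1 : ℝ) else 0) = if ∀ j ∈ T, i ≤ j then 1 else 0 := by
    convert prod_boole
  rw [prod_mul_distrib, hboole, ← prod_filter]
  simp only [seqAlloc, mem_insert_self, if_true, forall_mem_insert, le_refl, true_and,
    filter_insert, lt_irrefl, if_false]
  split_ifs <;> ring

theorem interimProb_seqAlloc [Fintype ι] (μ β : ι → ℝ) (i : ι) :
    interimProb (seqAlloc μ) β i =
      (μ i + (1 - μ i) * ∏ j ∈ univ with j < i, (1 - β j)) *
        ∏ j ∈ univ with i < j, (1 - μ j * β j) := by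
  set c : ι → ℝ := fun j => if i < j then 1 - μ j else 1
  set d : ι → ℝ := fun j => if i ≤ j then 1 else 0
  have hterm : ∀ T ∈ (univ.erase i).powerset,
      seqAlloc μ (insert i T) i * (∏ j ∈ (insert i T).erase i, β j) *
          ∏ j ∈ (insert i T)ᶜ, (1 - β j) =
        μ i * ((∏ j ∈ T, β j * c j) * ∏ j ∈ univ.erase i \ T, (1 - β j)) +
          (1 - μ i) * ((∏ j ∈ T, β j * c j * d j) * ∏ j ∈ univ.erase i \ T, (1 - β j)) := by
    intro T hT
    have hiT : i ∉ T := fun h => by simpa using (mem_powerset.1 hT) h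
    have hcompl : (insert i T)ᶜ = univ.erase i \ T := by
      ext j; simp [and_comm]
    rw [seqAlloc_insert_self_eq_add, erase_insert hiT, hcompl]
    simp only [c, d, prod_mul_distrib]
    ring
  rw [interimProb, sum_filter_mem_eq_sum_powerset_erase, sum_congr rfl hterm, sum_add_distrib,
    ← mul_sum, ← mul_sum, ← prod_add, ← prod_add]
  have hc : ∀ j, β j * c j + (1 - β j) = if i < j then 1 - μ j * β j else 1 := by
    intro j; simp only [c]; split_ifs <;> ring
  have hcd : ∀ j, β j * c j * d j + (1 - β j) =
      (if i < j then 1 - μ j * β j else 1) * (if j < i then 1 - β j else 1) := by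
    intro j
    rcases lt_trichotomy i j with h | rfl | h
    · simp only [c, d, h, h.le, h.not_gt, if_true, if_false, mul_one]
      ring
    · simp [c, d]
    · simp [c, d, h, h.not_ge, h.not_gt]
  rw [prod_erase _ (by rw [hc, if_neg (lt_irrefl i)]),
    prod_erase _ (by rw [hcd, if_neg (lt_irrefl i), if_neg (lt_irrefl i), mul_one])]
  simp only [hc, hcd, prod_mul_distrib, ← prod_filter]
  ring

end Sequential

section Prefix

variable (x : ℕ → ℝ)

def noBidProb (k : ℕ) : ℝ := ∏ j ∈ range k, (1 - x j)

def prefixShare (k : ℕ) : ℝ := (1 - noBidProb x k) / ∑ j ∈ range k, x j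

-- `acceptProb x 0 = 0 / 0 = 0` is never used: bidder `0` is the lowest of every set it is in.
def acceptProb (k : ℕ) : ℝ :=
  (prefixShare x (k + 1) - noBidProb x k) / (1 - noBidProb x k)

variable {x}

theorem noBidProb_zero : noBidProb x 0 = 1 := prod_range_zero _

theorem noBidProb_succ (k : ℕ) : noBidProb x (k + 1) = noBidProb x k * (1 - x k) :=
  prod_range_succ _ _

variable (hx : ∀ j, x j ∈ unitInterval) (hx₀ : 0 < x 0)
include hx

theorem prefixShare_le_one (k : ℕ) : prefixShare x k ≤ 1 := by
  have h : 1 - ∑ j ∈ range k, x j ≤ noBidProb x k := one_sub_sum_le_prod_one_sub fun j _ => hx j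
  exact div_le_one_of_le₀ (by linarith) (sum_nonneg fun j _ => (hx j).1)

include hx₀

theorem sum_range_pos {k : ℕ} (hk : k ≠ 0) : 0 < ∑ j ∈ range k, x j :=
  hx₀.trans_le <| single_le_sum (fun j _ => (hx j).1) (mem_range.2 (Nat.pos_of_ne_zero hk))

theorem noBidProb_lt_one {k : ℕ} (hk : k ≠ 0) : noBidProb x k < 1 := by
  have h : noBidProb x k * (1 + ∑ j ∈ range k, x j) ≤ 1 :=
    prod_one_sub_mul_one_add_sum_le_one fun j _ => hx j
  nlinarith [sum_range_pos hx hx₀ hk, (prod_nonneg fun j _ => sub_nonneg.2 (hx j).2 :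
    0 ≤ noBidProb x k)]

theorem noBidProb_le_prefixShare_succ (k : ℕ) : noBidProb x k ≤ prefixShare x (k + 1) := by
  have h : noBidProb x k * (1 + ∑ j ∈ range k, x j) ≤ 1 :=
    prod_one_sub_mul_one_add_sum_le_one fun j _ => hx j
  rw [prefixShare, le_div_iff₀ (sum_range_pos hx hx₀ k.succ_ne_zero), noBidProb_succ,
    sum_range_succ]
  linarith

theorem acceptProb_mem_unitInterval (k : ℕ) : acceptProb x k ∈ unitInterval := by
  rcases eq_or_ne k 0 with rfl | hk
  · simp [acceptProb, noBidProb_zero]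
  exact unitInterval.div_mem (sub_nonneg.2 (noBidProb_le_prefixShare_succ hx hx₀ k))
    (sub_nonneg.2 (noBidProb_lt_one hx hx₀ hk).le)
    (sub_le_sub_right (prefixShare_le_one hx _) _)

theorem acceptProb_add_mul_noBidProb (k : ℕ) :
    acceptProb x k + (1 - acceptProb x k) * noBidProb x k = prefixShare x (k + 1) := by
  rcases eq_or_ne k 0 with rfl | hk
  · rw [noBidProb_zero, prefixShare, noBidProb_succ, noBidProb_zero, sum_range_one,
      one_mul, sub_sub_cancel, div_self hx₀.ne']
    ring
  have hQ := (sub_pos.2 (noBidProb_lt_one hx hx₀ hk)).ne'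
  rw [acceptProb]
  field_simp
  ring

theorem prefixShare_succ {k : ℕ} (hk : k ≠ 0) :
    prefixShare x (k + 1) = prefixShare x k * (1 - acceptProb x k * x k) := by
  have hQ := (sub_pos.2 (noBidProb_lt_one hx hx₀ hk)).ne'
  have hX := (sum_range_pos hx hx₀ hk).ne'
  have hX' := (sum_range_pos hx hx₀ k.succ_ne_zero).ne'
  rw [sum_range_succ] at hX'
  rw [acceptProb, prefixShare, prefixShare, noBidProb_succ, sum_range_succ]
  field_simp
  ring

theorem prefixShare_succ_mul_prod_Ioo {k m : ℕ} (hkm : k < m) :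
    prefixShare x (k + 1) * ∏ j ∈ Ioo k m, (1 - acceptProb x j * x j) = prefixShare x m := by
  rw [← Ico_add_one_left_eq_Ioo]
  induction m, hkm using Nat.le_induction with
  | base => simp
  | succ m hkm ih =>
    rw [prod_Ico_succ_top (show k + 1 ≤ m from hkm), ← mul_assoc, ih,
      prefixShare_succ hx hx₀ (by omega)]

end Prefix

section FinitelyManyBidders

variable {n : ℕ} {β : Fin n → ℝ}

theorem extend_val_mem_unitInterval (hβ : ∀ i, β i ∈ unitInterval) (k : ℕ) :
    Function.extend Fin.val β 0 k ∈ unitInterval := by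
  by_cases hk : ∃ i : Fin n, (i : ℕ) = k
  · obtain ⟨i, rfl⟩ := hk
    rw [Fin.val_injective.extend_apply]
    exact hβ i
  · rw [Function.extend_apply' _ _ _ hk]
    exact unitInterval.zero_mem

theorem extend_val_zero_pos (hβ : ∀ i, 0 < β i) (i : Fin n) :
    0 < Function.extend Fin.val β 0 0 := by
  have h := Fin.val_injective.extend_apply β 0 ⟨0, i.pos⟩
  exact h ▸ hβ _

variable (hβ₀ : ∀ i, 0 < β i) (hβ₁ : ∀ i, β i ≤ 1)
include hβ₀ hβ₁

theorem interimProb_seqAlloc_acceptProb (i : Fin n) :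
    interimProb (seqAlloc fun j : Fin n => acceptProb (Function.extend Fin.val β 0) j) β i =
      (1 - ∏ j, (1 - β j)) / ∑ j, β j := by
  set x := Function.extend Fin.val β 0
  have hx := extend_val_mem_unitInterval (fun j => ⟨(hβ₀ j).le, hβ₁ j⟩)
  have hx₀ := extend_val_zero_pos hβ₀ i
  have hxβ : ∀ j : Fin n, x j = β j := fun j => Fin.val_injective.extend_apply _ _ _
  rw [interimProb_seqAlloc]
  simp_rw [← hxβ]
  rw [Fin.prod_filter_lt_eq_prod_range (fun k => 1 - x k),
    Fin.prod_filter_gt_eq_prod_Ioo (fun k => 1 - acceptProb x k * x k), ← noBidProb,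
    acceptProb_add_mul_noBidProb hx hx₀, prefixShare_succ_mul_prod_Ioo hx hx₀ i.isLt,
    prefixShare, noBidProb, Fin.prod_univ_eq_prod_range (fun k => 1 - x k),
    Fin.sum_univ_eq_sum_range]

theorem exists_allocation_interimProb_eq :
    ∃ q : Finset (Fin n) → Fin n → ℝ, (∀ S i, q S i ∈ unitInterval) ∧ (∀ S i, i ∉ S → q S i = 0) ∧
      (∀ S : Finset (Fin n), S.Nonempty → ∑ i ∈ S, q S i = 1) ∧
      ∀ i, interimProb q β i = (1 - ∏ j, (1 - β j)) / ∑ j, β j := by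
  have hx := extend_val_mem_unitInterval fun j => ⟨(hβ₀ j).le, hβ₁ j⟩
  refine ⟨seqAlloc fun j : Fin n => acceptProb (Function.extend Fin.val β 0) j,
    fun _ _ => seqAlloc_mem_unitInterval fun j => ?_, fun _ _ => seqAlloc_of_notMem,
    fun _ => sum_seqAlloc, interimProb_seqAlloc_acceptProb hβ₀ hβ₁⟩
  exact acceptProb_mem_unitInterval hx (extend_val_zero_pos hβ₀ j) _

end FinitelyManyBidders

end Allocation

end

theorem stmt_10_general (n : ℕ) (α : Fin n → ℝ) (γ : ℝ)
    (hα : ∀ i, 0 < α i) (hsum : ∑ i, α i = 1)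
    (hγ : 0 < γ) (hγα : ∀ i, γ * α i ≤ 1)
    (β : Fin n → ℝ) (hβ : ∀ i, β i = γ * α i)
    (p : ℝ) (hpdef : p = (1 - ∏ j, (1 - γ * α j)) / γ) :
    (∃ q : Finset (Fin n) → Fin n → ℝ,
      (∀ S i, 0 ≤ q S i ∧ q S i ≤ 1) ∧
      (∀ S i, i ∉ S → q S i = 0) ∧
      (∀ S : Finset (Fin n), S.Nonempty → ∑ i ∈ S, q S i = 1) ∧
      (∀ i, (∑ S ∈ Finset.univ.filter (fun S : Finset (Fin n) => i ∈ S),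
          q S i * (∏ j ∈ S.erase i, β j) * (∏ j ∈ Sᶜ, (1 - β j)))
        = p)) ∧
    (1 - Real.exp (-γ)) / γ ≤ p := by
  have hγsum : ∑ i, γ * α i = γ := by rw [← mul_sum, hsum, mul_one]
  constructor
  · have hp : (1 - ∏ j, (1 - β j)) / ∑ j, β j = p := by simp only [hβ, hγsum, hpdef]
    obtain ⟨q, hq⟩ := Allocation.exists_allocation_interimProb_eq (β := β)
      (fun i => hβ i ▸ mul_pos hγ (hα i)) (fun i => hβ i ▸ hγα i)
    exact ⟨q, hq.1, hq.2.1, hq.2.2.1, fun i => (hq.2.2.2 i).trans hp⟩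
  · have h := Real.prod_one_sub_le_exp_neg_sum (s := univ) fun i _ => hγα i
    rw [hγsum] at h
    rw [hpdef]
    gcongr

theorem stmt_10 (n : ℕ) (hn : 1 ≤ n) (α : Fin n → ℝ) (γ : ℝ)
    (hα : ∀ i, 0 < α i) (hsum : ∑ i, α i = 1)
    (hγ : 0 < γ) (hγα : ∀ i, γ * α i ≤ 1)
    (β : Fin n → ℝ) (hβ : ∀ i, β i = γ * α i)
    (p : ℝ) (hpdef : p = (1 - ∏ j, (1 - γ * α j)) / γ) :
    (∃ q : Finset (Fin n) → Fin n → ℝ,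
      (∀ S i, 0 ≤ q S i ∧ q S i ≤ 1) ∧
      (∀ S i, i ∉ S → q S i = 0) ∧
      (∀ S : Finset (Fin n), S.Nonempty → ∑ i ∈ S, q S i = 1) ∧
      (∀ i, (∑ S ∈ Finset.univ.filter (fun S : Finset (Fin n) => i ∈ S),
          q S i * (∏ j ∈ S.erase i, β j) * (∏ j ∈ Sᶜ, (1 - β j)))
        = p)) ∧
    (1 - Real.exp (-γ)) / γ ≤ p :=
  stmt_10_general n α γ hα hsum hγ hγα β hβ p hpdef
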